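/- Every stationary policy π with Pr^π(◇B) = x*_{s0} satisfies sup_{t≥1} Σ_{s∈B∪S_0} Σ_{a∈A(s)} μ_t^π(s,a) = 1; that is, any stationary policy that maximizes the probability of reaching B is guaranteed to reach the absorbing set B ∪ S_0 with probability 1. -/

import Mathlib

open scoped ENNReal

section

variable {S A : Type} [Fintype S] [Fintype A] [DecidableEq S] [DecidableEq A]

/-- A policy: a sequence of decision rules, each supported on the available actions. -/
def IsPolicy (avail : S → Finset A) (π : ℕ → S → A → ℝ) : Prop :=
  ∀ t s, (∀ a, 0 ≤ π t s a) ∧ (∀ a, a ∉ avail s → π t s a = 0) ∧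
    (∑ a ∈ avail s, π t s a) = 1

/-- A stationary policy uses the same decision rule at every stage. -/
def IsStationaryPolicy (π : ℕ → S → A → ℝ) : Prop := ∀ t, π t = π 0

/-- Occupancy measures: `occ P avail init π t s a` is `μ^π_{t+1}(s,a)` (stages indexed from 1). -/
def occ (P : S → A → S → ℝ) (avail : S → Finset A) (init : S)
    (π : ℕ → S → A → ℝ) : ℕ → S → A → ℝ
  | 0 => fun s a => if s = init then π 0 s a else 0
  | t + 1 => fun s' a' =>
      π (t + 1) s' a' * ∑ s : S, ∑ a ∈ avail s, P s a s' * occ P avail init π t s a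

/-- Expected residence time `ξ^π(s,a) ∈ [0,∞]`. -/
noncomputable def resTime (P : S → A → S → ℝ) (avail : S → Finset A) (init : S)
    (π : ℕ → S → A → ℝ) (s : S) (a : A) : ℝ≥0∞ :=
  ∑' t : ℕ, ENNReal.ofReal (occ P avail init π t s a)

/-- Probability of reaching the absorbing set `B`. -/
noncomputable def reachProb (P : S → A → S → ℝ) (avail : S → Finset A) (B : Finset S)
    (init : S) (π : ℕ → S → A → ℝ) : ℝ≥0∞ :=
  ⨆ t : ℕ, ∑ s ∈ B, ∑ a ∈ avail s, ENNReal.ofReal (occ P avail init π t s a)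

/-- `x*_s`: optimal probability of reaching `B` starting from `s`. -/
noncomputable def xstar (P : S → A → S → ℝ) (avail : S → Finset A) (B : Finset S)
    (s : S) : ℝ≥0∞ :=
  ⨆ π : {π : ℕ → S → A → ℝ // IsPolicy avail π}, reachProb P avail B s π.1

/-- A state is absorbing if every available action loops on it with probability 1. -/
def Absorbing (P : S → A → S → ℝ) (avail : S → Finset A) (s : S) : Prop :=
  ∀ a ∈ avail s, P s a s = 1

/-- Expected total cost `f_c(π) ∈ [0,∞]`. -/
noncomputable def totalCost (P : S → A → S → ℝ) (avail : S → Finset A) (init : S)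
    (c : S → A → ℝ) (π : ℕ → S → A → ℝ) : ℝ≥0∞ :=
  ∑ s : S, ∑ a ∈ avail s, resTime P avail init π s a * ENNReal.ofReal (c s a)

end

/-!
Value iteration `valueIter` computes finite-horizon optima, each attained by a greedy Markov
policy; hence `x* = ofReal ∘ optReach` with `optReach` the limit of the iterates, and
`optReach` is superharmonic for the kernel of every policy. For a stationary `π` with kernel
`K`, the reach-probability vector `y = policyReach π` is `K`-harmonic and `y ≤ optReach`, so
along `ν_t = K^t (s0, ·)` we get `ν_t ⬝ optReach ≤ optReach s0 = y s0 = ν_t ⬝ y`: the state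
distributions only charge states where `y = optReach`. Outside `B` the mass `ν_t ⬝ y` is
`y s0 - ν_t(B) → 0`, so `ν_t(s) → 0` at every `s ∉ B` with `optReach s > 0`, i.e. outside
`B ∪ S_0`.
-/

open Matrix Filter Topology

lemma mulVec_le_mulVec_of_nonneg {ι κ : Type*} [Fintype κ] {M : Matrix ι κ ℝ}
    (hM : ∀ i j, 0 ≤ M i j) {v w : κ → ℝ} (h : v ≤ w) : M *ᵥ v ≤ M *ᵥ w := fun i =>
  Finset.sum_le_sum fun j _ => mul_le_mul_of_nonneg_left (h j) (hM i j)

lemma mulVec_indicator_one_apply {ι κ : Type*} [Fintype κ] (M : Matrix ι κ ℝ) (C : Finset κ)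
    (i : ι) : (M *ᵥ (C : Set κ).indicator 1) i = ∑ j ∈ C, M i j := by
  classical
  simp [mulVec, dotProduct, Set.indicator_apply, Finset.sum_ite_mem]

lemma mul_eq_mul_of_mulVec_apply_le {ι κ : Type*} [Fintype κ] {M : Matrix ι κ ℝ}
    (hM : ∀ i j, 0 ≤ M i j) {v w : κ → ℝ} (hvw : v ≤ w) {i : ι}
    (h : (M *ᵥ w) i ≤ (M *ᵥ v) i) (j : κ) : M i j * w j = M i j * v j := by
  have hle : ∀ k ∈ Finset.univ, M i k * v k ≤ M i k * w k :=
    fun k _ => mul_le_mul_of_nonneg_left (hvw k) (hM i k)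
  by_contra hne
  exact h.not_gt <| Finset.sum_lt_sum hle
    ⟨j, Finset.mem_univ j, (hle j (Finset.mem_univ j)).lt_of_ne (Ne.symm hne)⟩

lemma Finset.sum_mul_le_sup' {ι : Type*} {s : Finset ι} (hs : s.Nonempty) {w f : ι → ℝ}
    (hw : ∀ i ∈ s, 0 ≤ w i) (hw1 : ∑ i ∈ s, w i = 1) : ∑ i ∈ s, w i * f i ≤ s.sup' hs f :=
  calc ∑ i ∈ s, w i * f i ≤ ∑ i ∈ s, w i * s.sup' hs f :=
        Finset.sum_le_sum fun i hi => mul_le_mul_of_nonneg_left (s.le_sup' f hi) (hw i hi)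
    _ = s.sup' hs f := by rw [← Finset.sum_mul, hw1, one_mul]

lemma iSup_ofReal_eq_one {f : ℕ → ℝ} (hf : ∀ n, f n ≤ 1) (h : Tendsto f atTop (𝓝 1)) :
    ⨆ n, ENNReal.ofReal (f n) = 1 :=
  le_antisymm (iSup_le fun n => ENNReal.ofReal_le_one.2 (hf n)) <|
    le_of_tendsto' (by simpa using ENNReal.tendsto_ofReal h)
      fun n => le_iSup (fun n => ENNReal.ofReal (f n)) n

section Occupancy

variable {S A : Type} {P : S → A → S → ℝ} {avail : S → Finset A} {π : ℕ → S → A → ℝ}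

variable (P avail) in
def policyKernel (π : ℕ → S → A → ℝ) (t : ℕ) : Matrix S S ℝ :=
  Matrix.of fun s s' => ∑ a ∈ avail s, π t s a * P s a s'

lemma policyKernel_nonneg (hP0 : ∀ s a s', 0 ≤ P s a s') (hπ : IsPolicy avail π) (t : ℕ)
    (s s' : S) : 0 ≤ policyKernel P avail π t s s' :=
  Finset.sum_nonneg fun a _ => mul_nonneg ((hπ t s).1 a) (hP0 _ _ _)

variable [Fintype S]

lemma policyKernel_mulVec_apply (f : S → ℝ) (t : ℕ) (s : S) :
    (policyKernel P avail π t *ᵥ f) s = ∑ a ∈ avail s, π t s a * ∑ s', P s a s' * f s' := by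
  simp only [mulVec, dotProduct, policyKernel, of_apply, Finset.sum_mul, Finset.mul_sum]
  rw [Finset.sum_comm]
  exact Finset.sum_congr rfl fun a _ => Finset.sum_congr rfl fun s' _ => by ring

lemma policyKernel_mulVec_one (hP1 : ∀ s, ∀ a ∈ avail s, ∑ s', P s a s' = 1)
    (hπ : IsPolicy avail π) (t : ℕ) : policyKernel P avail π t *ᵥ 1 = 1 := by
  ext s
  rw [policyKernel_mulVec_apply, Pi.one_apply, ← (hπ t s).2.2]
  exact Finset.sum_congr rfl fun a ha => by simp [hP1 s a ha]

variable [DecidableEq S]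

variable (P avail) in
/-- `stateOcc P avail π t s s'` is the probability of being in `s'` at stage `t + 1` when
starting from `s`. -/
def stateOcc (π : ℕ → S → A → ℝ) (t : ℕ) : Matrix S S ℝ :=
  Matrix.of fun s s' => ∑ a ∈ avail s', occ P avail s π t s' a

lemma stateOcc_apply (t : ℕ) (s s' : S) :
    stateOcc P avail π t s s' = ∑ a ∈ avail s', occ P avail s π t s' a := rfl

lemma occ_nonneg (hP0 : ∀ s a s', 0 ≤ P s a s') (hπ : IsPolicy avail π) (init : S) (t : ℕ)
    (s : S) (a : A) : 0 ≤ occ P avail init π t s a := by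
  induction t generalizing s a with
  | zero => unfold occ; split_ifs; exacts [(hπ 0 s).1 a, le_rfl]
  | succ t ih =>
    exact mul_nonneg ((hπ _ s).1 a) (Finset.sum_nonneg fun _ _ =>
      Finset.sum_nonneg fun _ _ => mul_nonneg (hP0 _ _ _) (ih _ _))

lemma stateOcc_nonneg (hP0 : ∀ s a s', 0 ≤ P s a s') (hπ : IsPolicy avail π) (t : ℕ)
    (s s' : S) : 0 ≤ stateOcc P avail π t s s' :=
  Finset.sum_nonneg fun _ _ => occ_nonneg hP0 hπ s t s' _

lemma occ_eq_mul_stateOcc (hπ : IsPolicy avail π) (init : S) (t : ℕ) (s : S) (a : A) :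
    occ P avail init π t s a = π t s a * stateOcc P avail π t init s := by
  cases t with
  | zero =>
    simp only [stateOcc_apply, occ]
    split_ifs
    · rw [(hπ 0 s).2.2, mul_one]
    · simp
  | succ t => simp only [stateOcc_apply, occ]; rw [← Finset.sum_mul, (hπ _ s).2.2, one_mul]

lemma stateOcc_zero (hπ : IsPolicy avail π) : stateOcc P avail π 0 = 1 := by
  ext s s'
  simp only [stateOcc_apply, occ, one_apply, eq_comm (a := s')]
  split_ifs
  exacts [(hπ 0 s').2.2, Finset.sum_const_zero]

lemma stateOcc_succ (hπ : IsPolicy avail π) (t : ℕ) :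
    stateOcc P avail π (t + 1) = stateOcc P avail π t * policyKernel P avail π t := by
  ext s s'
  rw [mul_apply, stateOcc_apply]
  simp only [occ, policyKernel, of_apply]
  rw [← Finset.sum_mul, (hπ _ s').2.2, one_mul]
  refine Finset.sum_congr rfl fun x _ => ?_
  simp_rw [occ_eq_mul_stateOcc hπ s t x, Finset.mul_sum]
  exact Finset.sum_congr rfl fun a _ => by ring

lemma stateOcc_eq_pow (hπ : IsPolicy avail π) (hstat : IsStationaryPolicy π) (t : ℕ) :
    stateOcc P avail π t = policyKernel P avail π 0 ^ t := by
  induction t with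
  | zero => exact stateOcc_zero hπ
  | succ t ih => rw [stateOcc_succ hπ, ih, pow_succ, policyKernel, policyKernel, hstat t]

end Occupancy

section Comparison

variable {S A : Type} [Fintype S] [DecidableEq S] {P : S → A → S → ℝ} {avail : S → Finset A}
  {π : ℕ → S → A → ℝ}

lemma stateOcc_mulVec_le (hP0 : ∀ s a s', 0 ≤ P s a s') (hπ : IsPolicy avail π)
    (g : ℕ → S → ℝ) (n : ℕ) (hg : ∀ k < n, policyKernel P avail π k *ᵥ g (k + 1) ≤ g k) :
    stateOcc P avail π n *ᵥ g n ≤ g 0 := by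
  induction n with
  | zero => rw [stateOcc_zero hπ, one_mulVec]
  | succ n ih =>
    calc stateOcc P avail π (n + 1) *ᵥ g (n + 1)
        = stateOcc P avail π n *ᵥ policyKernel P avail π n *ᵥ g (n + 1) := by
          rw [stateOcc_succ hπ, mulVec_mulVec]
      _ ≤ stateOcc P avail π n *ᵥ g n :=
          mulVec_le_mulVec_of_nonneg (stateOcc_nonneg hP0 hπ n) (hg n n.lt_succ_self)
      _ ≤ g 0 := ih fun k hk => hg k (hk.trans n.lt_succ_self)

lemma le_stateOcc_mulVec (hP0 : ∀ s a s', 0 ≤ P s a s') (hπ : IsPolicy avail π)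
    (g : ℕ → S → ℝ) (n : ℕ) (hg : ∀ k < n, g k ≤ policyKernel P avail π k *ᵥ g (k + 1)) :
    g 0 ≤ stateOcc P avail π n *ᵥ g n := by
  simpa [mulVec_neg] using
    stateOcc_mulVec_le hP0 hπ (-g) n fun k hk => by simpa [mulVec_neg] using hg k hk

lemma sum_stateOcc (hP0 : ∀ s a s', 0 ≤ P s a s') (hP1 : ∀ s, ∀ a ∈ avail s, ∑ s', P s a s' = 1)
    (hπ : IsPolicy avail π) (t : ℕ) (s : S) : ∑ s', stateOcc P avail π t s s' = 1 := by
  have hK : ∀ k, policyKernel P avail π k *ᵥ 1 = 1 := policyKernel_mulVec_one hP1 hπ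
  have h := le_antisymm (stateOcc_mulVec_le hP0 hπ (fun _ => 1) t fun k _ => (hK k).le)
    (le_stateOcc_mulVec hP0 hπ (fun _ => 1) t fun k _ => (hK k).ge)
  simpa [mulVec, dotProduct] using congrFun h s

lemma tendsto_stateOcc_mulVec_indicator_one (hP0 : ∀ s a s', 0 ≤ P s a s')
    (hP1 : ∀ s, ∀ a ∈ avail s, ∑ s', P s a s' = 1) (hπ : IsPolicy avail π) {C : Finset S}
    {init : S} (h : ∀ s ∉ C, Tendsto (fun t => stateOcc P avail π t init s) atTop (𝓝 0)) :
    Tendsto (fun t => (stateOcc P avail π t *ᵥ (C : Set S).indicator 1) init) atTop (𝓝 1) := by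
  have hsplit : ∀ t, (stateOcc P avail π t *ᵥ (C : Set S).indicator 1) init =
      1 - ∑ s ∈ Cᶜ, stateOcc P avail π t init s := fun t => by
    rw [mulVec_indicator_one_apply, eq_sub_iff_add_eq, Finset.sum_add_sum_compl,
      sum_stateOcc hP0 hP1 hπ]
  simp_rw [hsplit]
  simpa using tendsto_const_nhds.sub (tendsto_finsetSum _ fun s hs => h s (Finset.mem_compl.1 hs))

lemma stateOcc_mulVec_indicator_nonneg (hP0 : ∀ s a s', 0 ≤ P s a s') (hπ : IsPolicy avail π)
    (C : Finset S) (t : ℕ) (s : S) : 0 ≤ (stateOcc P avail π t *ᵥ (C : Set S).indicator 1) s := by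
  rw [mulVec_indicator_one_apply]
  exact Finset.sum_nonneg fun s' _ => stateOcc_nonneg hP0 hπ t s s'

lemma stateOcc_mulVec_indicator_le_one (hP0 : ∀ s a s', 0 ≤ P s a s')
    (hP1 : ∀ s, ∀ a ∈ avail s, ∑ s', P s a s' = 1) (hπ : IsPolicy avail π)
    (C : Finset S) (t : ℕ) (s : S) : (stateOcc P avail π t *ᵥ (C : Set S).indicator 1) s ≤ 1 := by
  rw [mulVec_indicator_one_apply, ← sum_stateOcc hP0 hP1 hπ t s]
  exact Finset.sum_le_sum_of_subset_of_nonneg (Finset.subset_univ C)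
    fun s' _ _ => stateOcc_nonneg hP0 hπ t s s'

lemma indicator_le_policyKernel_mulVec (hP0 : ∀ s a s', 0 ≤ P s a s') (hπ : IsPolicy avail π)
    {C : Finset S} (hC : ∀ s ∈ C, Absorbing P avail s) (t : ℕ) :
    (C : Set S).indicator 1 ≤ policyKernel P avail π t *ᵥ (C : Set S).indicator 1 := by
  intro s
  rw [mulVec_indicator_one_apply]
  by_cases hs : s ∈ C
  · have hss : policyKernel P avail π t s s = 1 := by
      rw [policyKernel, of_apply, ← (hπ t s).2.2]
      exact Finset.sum_congr rfl fun a ha => by rw [hC s hs a ha, mul_one]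
    rw [Set.indicator_of_mem (Finset.mem_coe.2 hs), Pi.one_apply, ← hss]
    exact Finset.single_le_sum (fun s' _ => policyKernel_nonneg hP0 hπ t s s') hs
  · rw [Set.indicator_of_notMem (Finset.mem_coe.not.2 hs)]
    exact Finset.sum_nonneg fun s' _ => policyKernel_nonneg hP0 hπ t s s'

lemma monotone_stateOcc_mulVec_indicator (hP0 : ∀ s a s', 0 ≤ P s a s') (hπ : IsPolicy avail π)
    {C : Finset S} (hC : ∀ s ∈ C, Absorbing P avail s) :
    Monotone fun t => stateOcc P avail π t *ᵥ (C : Set S).indicator 1 :=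
  monotone_nat_of_le_succ fun t => by
    rw [stateOcc_succ hπ, ← mulVec_mulVec]
    exact mulVec_le_mulVec_of_nonneg (stateOcc_nonneg hP0 hπ t)
      (indicator_le_policyKernel_mulVec hP0 hπ hC t)

lemma sum_ofReal_occ (hP0 : ∀ s a s', 0 ≤ P s a s') (hπ : IsPolicy avail π) (C : Finset S)
    (init : S) (t : ℕ) :
    ∑ s ∈ C, ∑ a ∈ avail s, ENNReal.ofReal (occ P avail init π t s a) =
      ENNReal.ofReal ((stateOcc P avail π t *ᵥ (C : Set S).indicator 1) init) := by
  rw [mulVec_indicator_one_apply,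
    ENNReal.ofReal_sum_of_nonneg fun s _ => stateOcc_nonneg hP0 hπ t init s]
  refine Finset.sum_congr rfl fun s _ => ?_
  rw [stateOcc_apply, ENNReal.ofReal_sum_of_nonneg fun a _ => occ_nonneg hP0 hπ init t s a]

lemma reachProb_eq_iSup (hP0 : ∀ s a s', 0 ≤ P s a s') (hπ : IsPolicy avail π) (init : S) :
    reachProb P avail B init π =
      ⨆ t, ENNReal.ofReal ((stateOcc P avail π t *ᵥ (B : Set S).indicator 1) init) :=
  iSup_congr fun t => sum_ofReal_occ hP0 hπ B init t

end Comparison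

section ValueIteration

variable {S A : Type} [Fintype S] {P : S → A → S → ℝ} {avail : S → Finset A}
  {havail : ∀ s, (avail s).Nonempty} {B : Finset S} {π : ℕ → S → A → ℝ}

variable (P havail B) in
noncomputable def valueIter : ℕ → S → ℝ
  | 0 => (B : Set S).indicator 1
  | n + 1 => fun s => (avail s).sup' (havail s) fun a => ∑ s', P s a s' * valueIter n s'

lemma policyKernel_mulVec_le_valueIter_succ (hπ : IsPolicy avail π) (t n : ℕ) :
    policyKernel P avail π t *ᵥ valueIter P havail B n ≤ valueIter P havail B (n + 1) :=
  fun s => (policyKernel_mulVec_apply _ t s).trans_le <|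
    Finset.sum_mul_le_sup' (havail s) (fun a _ => (hπ t s).1 a) (hπ t s).2.2

variable (P havail B) in
noncomputable def greedyAction (n : ℕ) (s : S) : A :=
  (Finset.exists_mem_eq_sup' (havail s) fun a => ∑ s', P s a s' * valueIter P havail B n s').choose

lemma greedyAction_mem (n : ℕ) (s : S) : greedyAction P havail B n s ∈ avail s :=
  (Finset.exists_mem_eq_sup' (havail s) _).choose_spec.1

lemma valueIter_succ_eq_greedyAction (n : ℕ) (s : S) :
    valueIter P havail B (n + 1) s =
      ∑ s', P s (greedyAction P havail B n s) s' * valueIter P havail B n s' :=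
  (Finset.exists_mem_eq_sup' (havail s) _).choose_spec.2

open Classical in
variable (P havail B) in
/-- For horizon `n`, at stage `k < n` this policy plays greedily for the remaining
`n - (k + 1)` steps. -/
noncomputable def greedyPolicy (n : ℕ) : ℕ → S → A → ℝ :=
  fun k s a => if a = greedyAction P havail B (n - (k + 1)) s then 1 else 0

variable (P havail B) in
lemma isPolicy_greedyPolicy (n : ℕ) : IsPolicy avail (greedyPolicy P havail B n) := by
  intro k s
  unfold greedyPolicy
  refine ⟨fun a => ?_, fun a ha => if_neg ?_, ?_⟩
  · split_ifs <;> norm_num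
  · rintro rfl
    exact ha (greedyAction_mem _ s)
  · rw [Finset.sum_eq_single_of_mem _ (greedyAction_mem _ s) fun b _ hb => if_neg hb]
    exact if_pos rfl

lemma policyKernel_greedyPolicy_mulVec (n k : ℕ) :
    policyKernel P avail (greedyPolicy P havail B n) k *ᵥ valueIter P havail B (n - (k + 1)) =
      valueIter P havail B (n - (k + 1) + 1) := by
  ext s
  rw [policyKernel_mulVec_apply, valueIter_succ_eq_greedyAction,
    Finset.sum_eq_single_of_mem _ (greedyAction_mem _ s) fun b _ hb => by
      rw [greedyPolicy, if_neg hb, zero_mul]]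
  rw [greedyPolicy, if_pos rfl, one_mul]

variable [DecidableEq S]

lemma stateOcc_mulVec_indicator_le_valueIter (hP0 : ∀ s a s', 0 ≤ P s a s')
    (hπ : IsPolicy avail π) (n : ℕ) :
    stateOcc P avail π n *ᵥ (B : Set S).indicator 1 ≤ valueIter P havail B n := by
  have h := stateOcc_mulVec_le hP0 hπ (fun k => valueIter P havail B (n - k)) n fun k hk => by
    rw [show n - k = n - (k + 1) + 1 by omega]
    exact policyKernel_mulVec_le_valueIter_succ hπ k _
  simpa [valueIter] using h

lemma valueIter_le_stateOcc_greedyPolicy_mulVec (hP0 : ∀ s a s', 0 ≤ P s a s') (n : ℕ) :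
    valueIter P havail B n ≤
      stateOcc P avail (greedyPolicy P havail B n) n *ᵥ (B : Set S).indicator 1 := by
  have h := le_stateOcc_mulVec hP0 (isPolicy_greedyPolicy P havail B n)
    (fun k => valueIter P havail B (n - k)) n fun k hk => by
      rw [show n - k = n - (k + 1) + 1 by omega]
      exact (policyKernel_greedyPolicy_mulVec n k).ge
  simpa [valueIter] using h

end ValueIteration

section OptimalValue

variable {S A : Type} [Fintype S] [DecidableEq S] {P : S → A → S → ℝ} {avail : S → Finset A}
  {havail : ∀ s, (avail s).Nonempty} {B : Finset S} {π : ℕ → S → A → ℝ}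

lemma valueIter_nonneg (hP0 : ∀ s a s', 0 ≤ P s a s') (n : ℕ) (s : S) :
    0 ≤ valueIter P havail B n s :=
  (stateOcc_mulVec_indicator_nonneg hP0 (isPolicy_greedyPolicy P havail B n) B n s).trans
    (stateOcc_mulVec_indicator_le_valueIter hP0 (isPolicy_greedyPolicy P havail B n) n s)

lemma valueIter_le_one (hP0 : ∀ s a s', 0 ≤ P s a s')
    (hP1 : ∀ s, ∀ a ∈ avail s, ∑ s', P s a s' = 1) (n : ℕ) (s : S) :
    valueIter P havail B n s ≤ 1 :=
  (valueIter_le_stateOcc_greedyPolicy_mulVec hP0 n s).trans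
    (stateOcc_mulVec_indicator_le_one hP0 hP1 (isPolicy_greedyPolicy P havail B n) B n s)

variable (P havail B) in
noncomputable def optReach (s : S) : ℝ := ⨆ n, valueIter P havail B n s

lemma bddAbove_range_valueIter (hP0 : ∀ s a s', 0 ≤ P s a s')
    (hP1 : ∀ s, ∀ a ∈ avail s, ∑ s', P s a s' = 1) (s : S) :
    BddAbove (Set.range fun n => valueIter P havail B n s) :=
  ⟨1, Set.forall_mem_range.2 fun n => valueIter_le_one hP0 hP1 n s⟩

lemma valueIter_le_optReach (hP0 : ∀ s a s', 0 ≤ P s a s')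
    (hP1 : ∀ s, ∀ a ∈ avail s, ∑ s', P s a s' = 1) (n : ℕ) :
    valueIter P havail B n ≤ optReach P havail B :=
  fun s => le_ciSup (bddAbove_range_valueIter hP0 hP1 s) n

lemma optReach_nonneg (hP0 : ∀ s a s', 0 ≤ P s a s')
    (hP1 : ∀ s, ∀ a ∈ avail s, ∑ s', P s a s' = 1) (s : S) : 0 ≤ optReach P havail B s :=
  (valueIter_nonneg hP0 0 s).trans (valueIter_le_optReach hP0 hP1 0 s)

lemma monotone_valueIter (hP0 : ∀ s a s', 0 ≤ P s a s')
    (habsB : ∀ s ∈ B, Absorbing P avail s) : Monotone (valueIter P havail B) :=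
  monotone_nat_of_le_succ fun n =>
    calc valueIter P havail B n
        ≤ stateOcc P avail (greedyPolicy P havail B n) n *ᵥ (B : Set S).indicator 1 :=
          valueIter_le_stateOcc_greedyPolicy_mulVec hP0 n
      _ ≤ stateOcc P avail (greedyPolicy P havail B n) (n + 1) *ᵥ (B : Set S).indicator 1 :=
          monotone_stateOcc_mulVec_indicator hP0 (isPolicy_greedyPolicy P havail B n) habsB
            n.le_succ
      _ ≤ valueIter P havail B (n + 1) :=
          stateOcc_mulVec_indicator_le_valueIter hP0 (isPolicy_greedyPolicy P havail B n) (n + 1)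

lemma tendsto_valueIter (hP0 : ∀ s a s', 0 ≤ P s a s')
    (hP1 : ∀ s, ∀ a ∈ avail s, ∑ s', P s a s' = 1) (habsB : ∀ s ∈ B, Absorbing P avail s) :
    Tendsto (valueIter P havail B) atTop (𝓝 (optReach P havail B)) :=
  tendsto_pi_nhds.2 fun s => tendsto_atTop_ciSup
    (fun _ _ hmn => monotone_valueIter hP0 habsB hmn s) (bddAbove_range_valueIter hP0 hP1 s)

lemma policyKernel_mulVec_optReach_le (hP0 : ∀ s a s', 0 ≤ P s a s')
    (hP1 : ∀ s, ∀ a ∈ avail s, ∑ s', P s a s' = 1) (habsB : ∀ s ∈ B, Absorbing P avail s)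
    (hπ : IsPolicy avail π) (t : ℕ) :
    policyKernel P avail π t *ᵥ optReach P havail B ≤ optReach P havail B :=
  le_of_tendsto'
    (((continuous_const.matrix_mulVec continuous_id).tendsto _).comp
      (tendsto_valueIter hP0 hP1 habsB))
    fun n => (policyKernel_mulVec_le_valueIter_succ hπ t n).trans
      (valueIter_le_optReach hP0 hP1 (n + 1))

variable (havail) in
lemma xstar_eq_ofReal_optReach (hP0 : ∀ s a s', 0 ≤ P s a s')
    (hP1 : ∀ s, ∀ a ∈ avail s, ∑ s', P s a s' = 1) (s : S) :
    xstar P avail B s = ENNReal.ofReal (optReach P havail B s) := by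
  rw [optReach, Monotone.map_ciSup_of_continuousAt ENNReal.continuous_ofReal.continuousAt
    ENNReal.ofReal_mono (bddAbove_range_valueIter hP0 hP1 s)]
  refine le_antisymm (iSup_le fun π => ?_) (iSup_le fun n => ?_)
  · rw [reachProb_eq_iSup hP0 π.2]
    exact iSup_le fun t => le_iSup_of_le t <| ENNReal.ofReal_le_ofReal <|
      stateOcc_mulVec_indicator_le_valueIter hP0 π.2 t s
  · refine (ENNReal.ofReal_le_ofReal (valueIter_le_stateOcc_greedyPolicy_mulVec hP0 n s)).trans ?_
    refine le_iSup_of_le ⟨_, isPolicy_greedyPolicy P havail B n⟩ ?_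
    rw [reachProb_eq_iSup hP0 (isPolicy_greedyPolicy P havail B n)]
    exact le_iSup_of_le n le_rfl

end OptimalValue

section PolicyReach

variable {S A : Type} [Fintype S] [DecidableEq S] {P : S → A → S → ℝ} {avail : S → Finset A}
  {havail : ∀ s, (avail s).Nonempty} {B : Finset S} {π : ℕ → S → A → ℝ}

variable (P avail B) in
noncomputable def policyReach (π : ℕ → S → A → ℝ) (s : S) : ℝ :=
  ⨆ t, (stateOcc P avail π t *ᵥ (B : Set S).indicator 1) s

lemma bddAbove_range_stateOcc_mulVec_indicator (hP0 : ∀ s a s', 0 ≤ P s a s')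
    (hP1 : ∀ s, ∀ a ∈ avail s, ∑ s', P s a s' = 1) (hπ : IsPolicy avail π) (s : S) :
    BddAbove (Set.range fun t => (stateOcc P avail π t *ᵥ (B : Set S).indicator 1) s) :=
  ⟨1, Set.forall_mem_range.2 fun t => stateOcc_mulVec_indicator_le_one hP0 hP1 hπ B t s⟩

lemma policyReach_nonneg (hP0 : ∀ s a s', 0 ≤ P s a s')
    (hP1 : ∀ s, ∀ a ∈ avail s, ∑ s', P s a s' = 1) (hπ : IsPolicy avail π) (s : S) :
    0 ≤ policyReach P avail B π s :=
  (stateOcc_mulVec_indicator_nonneg hP0 hπ B 0 s).trans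
    (le_ciSup (bddAbove_range_stateOcc_mulVec_indicator hP0 hP1 hπ s) 0)

lemma policyReach_of_mem (hP0 : ∀ s a s', 0 ≤ P s a s')
    (hP1 : ∀ s, ∀ a ∈ avail s, ∑ s', P s a s' = 1) (hπ : IsPolicy avail π) {s : S}
    (hs : s ∈ B) : policyReach P avail B π s = 1 := by
  refine le_antisymm (ciSup_le fun t => stateOcc_mulVec_indicator_le_one hP0 hP1 hπ B t s) ?_
  refine le_ciSup_of_le (bddAbove_range_stateOcc_mulVec_indicator hP0 hP1 hπ s) 0 ?_
  simp [stateOcc_zero hπ, hs]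

lemma policyReach_le_optReach (hP0 : ∀ s a s', 0 ≤ P s a s')
    (hP1 : ∀ s, ∀ a ∈ avail s, ∑ s', P s a s' = 1) (hπ : IsPolicy avail π) :
    policyReach P avail B π ≤ optReach P havail B :=
  fun s => ciSup_le fun t => (stateOcc_mulVec_indicator_le_valueIter hP0 hπ t s).trans
    (valueIter_le_optReach hP0 hP1 t s)

lemma reachProb_eq_ofReal_policyReach (hP0 : ∀ s a s', 0 ≤ P s a s')
    (hP1 : ∀ s, ∀ a ∈ avail s, ∑ s', P s a s' = 1) (hπ : IsPolicy avail π) (init : S) :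
    reachProb P avail B init π = ENNReal.ofReal (policyReach P avail B π init) := by
  rw [reachProb_eq_iSup hP0 hπ, policyReach, Monotone.map_ciSup_of_continuousAt
    ENNReal.continuous_ofReal.continuousAt ENNReal.ofReal_mono
    (bddAbove_range_stateOcc_mulVec_indicator hP0 hP1 hπ init)]

lemma tendsto_stateOcc_mulVec_indicator (hP0 : ∀ s a s', 0 ≤ P s a s')
    (hP1 : ∀ s, ∀ a ∈ avail s, ∑ s', P s a s' = 1) (habsB : ∀ s ∈ B, Absorbing P avail s)
    (hπ : IsPolicy avail π) :
    Tendsto (fun t => stateOcc P avail π t *ᵥ (B : Set S).indicator 1) atTop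
      (𝓝 (policyReach P avail B π)) :=
  tendsto_pi_nhds.2 fun s => tendsto_atTop_ciSup
    (fun _ _ hmn => monotone_stateOcc_mulVec_indicator hP0 hπ habsB hmn s)
    (bddAbove_range_stateOcc_mulVec_indicator hP0 hP1 hπ s)

lemma stateOcc_mulVec_policyReach (hP0 : ∀ s a s', 0 ≤ P s a s')
    (hP1 : ∀ s, ∀ a ∈ avail s, ∑ s', P s a s' = 1) (habsB : ∀ s ∈ B, Absorbing P avail s)
    (hπ : IsPolicy avail π) (hstat : IsStationaryPolicy π) (t : ℕ) :
    stateOcc P avail π t *ᵥ policyReach P avail B π = policyReach P avail B π := by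
  have h := tendsto_stateOcc_mulVec_indicator hP0 hP1 habsB hπ
  refine tendsto_nhds_unique (((continuous_const.matrix_mulVec continuous_id).tendsto _).comp h)
    ((h.comp (tendsto_add_atTop_nat t)).congr fun n => ?_)
  simp only [Function.comp_apply, id_eq, stateOcc_eq_pow hπ hstat, mulVec_mulVec, ← pow_add,
    add_comm]

lemma tendsto_stateOcc_mul_policyReach (hP0 : ∀ s a s', 0 ≤ P s a s')
    (hP1 : ∀ s, ∀ a ∈ avail s, ∑ s', P s a s' = 1) (habsB : ∀ s ∈ B, Absorbing P avail s)
    (hπ : IsPolicy avail π) (hstat : IsStationaryPolicy π) (init : S) {s : S} (hs : s ∉ B) :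
    Tendsto (fun t => stateOcc P avail π t init s * policyReach P avail B π s) atTop (𝓝 0) := by
  have hterm : ∀ t s', 0 ≤ stateOcc P avail π t init s' * policyReach P avail B π s' :=
    fun t s' => mul_nonneg (stateOcc_nonneg hP0 hπ t init s') (policyReach_nonneg hP0 hP1 hπ s')
  have htail : ∀ t, ∑ s' ∈ Bᶜ, stateOcc P avail π t init s' * policyReach P avail B π s' =
      policyReach P avail B π init - (stateOcc P avail π t *ᵥ (B : Set S).indicator 1) init := by
    intro t
    rw [eq_sub_iff_add_eq',
      ← congrFun (stateOcc_mulVec_policyReach hP0 hP1 habsB hπ hstat t) init,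
      mulVec_indicator_one_apply, mulVec, dotProduct, ← Finset.sum_add_sum_compl B]
    congr 1
    exact Finset.sum_congr rfl fun s' hs' => by rw [policyReach_of_mem hP0 hP1 hπ hs', mul_one]
  have hlim : Tendsto (fun t => policyReach P avail B π init -
      (stateOcc P avail π t *ᵥ (B : Set S).indicator 1) init) atTop (𝓝 0) := by
    simpa using (tendsto_const_nhds (x := policyReach P avail B π init)).sub
      (((continuous_apply init).tendsto _).comp
        (tendsto_stateOcc_mulVec_indicator hP0 hP1 habsB hπ))
  refine squeeze_zero (fun t => hterm t s) (fun t => ?_) hlim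
  rw [← htail]
  exact Finset.single_le_sum
    (f := fun s' => stateOcc P avail π t init s' * policyReach P avail B π s')
    (fun s' _ => hterm t s') (Finset.mem_compl.2 hs)

lemma stateOcc_mul_optReach_eq (hP0 : ∀ s a s', 0 ≤ P s a s')
    (hP1 : ∀ s, ∀ a ∈ avail s, ∑ s', P s a s' = 1) (habsB : ∀ s ∈ B, Absorbing P avail s)
    (hπ : IsPolicy avail π) (hstat : IsStationaryPolicy π) {s0 : S}
    (hopt : policyReach P avail B π s0 = optReach P havail B s0) (t : ℕ) (s : S) :
    stateOcc P avail π t s0 s * optReach P havail B s =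
      stateOcc P avail π t s0 s * policyReach P avail B π s := by
  refine mul_eq_mul_of_mulVec_apply_le (stateOcc_nonneg hP0 hπ t)
    (policyReach_le_optReach hP0 hP1 hπ) ?_ s
  calc (stateOcc P avail π t *ᵥ optReach P havail B) s0 ≤ optReach P havail B s0 :=
        stateOcc_mulVec_le hP0 hπ (fun _ => optReach P havail B) t
          (fun k _ => policyKernel_mulVec_optReach_le hP0 hP1 habsB hπ k) s0
    _ = (stateOcc P avail π t *ᵥ policyReach P avail B π) s0 := by
        rw [← hopt, stateOcc_mulVec_policyReach hP0 hP1 habsB hπ hstat t]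

lemma tendsto_stateOcc_of_policyReach_eq_optReach (hP0 : ∀ s a s', 0 ≤ P s a s')
    (hP1 : ∀ s, ∀ a ∈ avail s, ∑ s', P s a s' = 1) (habsB : ∀ s ∈ B, Absorbing P avail s)
    (hπ : IsPolicy avail π) (hstat : IsStationaryPolicy π) {s0 : S}
    (hopt : policyReach P avail B π s0 = optReach P havail B s0) {s : S} (hsB : s ∉ B)
    (hs : 0 < optReach P havail B s) :
    Tendsto (fun t => stateOcc P avail π t s0 s) atTop (𝓝 0) := by
  have h := (tendsto_stateOcc_mul_policyReach hP0 hP1 habsB hπ hstat s0 hsB).div_const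
    (optReach P havail B s)
  rw [zero_div] at h
  refine h.congr fun t => ?_
  rw [← stateOcc_mul_optReach_eq hP0 hP1 habsB hπ hstat hopt, mul_div_cancel_right₀ _ hs.ne']

end PolicyReach

section

variable {S A : Type} [Fintype S] [Fintype A] [DecidableEq S] [DecidableEq A]

open scoped Classical

theorem stationary_optimal_policy_reaches_absorbing_set_general
    (P : S → A → S → ℝ) (avail : S → Finset A) (s0 : S) (B : Finset S)
    (havail : ∀ s, (avail s).Nonempty)
    (hP0 : ∀ s a s', 0 ≤ P s a s')
    (hP1 : ∀ s, ∀ a ∈ avail s, (∑ s' : S, P s a s') = 1)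
    (habs : ∀ s : S, (s ∈ B ∨ xstar P avail B s = 0) → Absorbing P avail s)
    (π : ℕ → S → A → ℝ) (hπ : IsPolicy avail π) (hstat : IsStationaryPolicy π)
    (hopt : reachProb P avail B s0 π = xstar P avail B s0) :
    (⨆ t : ℕ, ∑ s ∈ B ∪ Finset.univ.filter (fun s => xstar P avail B s = 0),
      ∑ a ∈ avail s, ENNReal.ofReal (occ P avail s0 π t s a)) = 1 := by
  have habsB : ∀ s ∈ B, Absorbing P avail s := fun s hs => habs s (Or.inl hs)
  have hxstar := xstar_eq_ofReal_optReach havail (B := B) hP0 hP1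
  rw [reachProb_eq_ofReal_policyReach hP0 hP1 hπ, hxstar, ENNReal.ofReal_eq_ofReal_iff
    (policyReach_nonneg hP0 hP1 hπ s0) (optReach_nonneg hP0 hP1 s0)] at hopt
  simp_rw [sum_ofReal_occ hP0 hπ]
  refine iSup_ofReal_eq_one (fun t => stateOcc_mulVec_indicator_le_one hP0 hP1 hπ _ t s0)
    (tendsto_stateOcc_mulVec_indicator_one hP0 hP1 hπ fun s hs => ?_)
  simp only [Finset.mem_union, Finset.mem_filter, Finset.mem_univ, true_and, not_or] at hs
  obtain ⟨hsB, hsx⟩ := hs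
  rw [hxstar, ENNReal.ofReal_eq_zero, not_le] at hsx
  exact tendsto_stateOcc_of_policyReach_eq_optReach hP0 hP1 habsB hπ hstat hopt hsB hsx

/-- Any stationary policy that maximizes the probability of reaching `B` reaches the absorbing
set `B ∪ S_0` with probability 1:
`sup_{t≥1} Σ_{s∈B∪S_0} Σ_{a∈A(s)} μ^π_t(s,a) = 1`. -/
theorem stationary_optimal_policy_reaches_absorbing_set
    (P : S → A → S → ℝ) (avail : S → Finset A) (s0 : S) (B : Finset S)
    (havail : ∀ s, (avail s).Nonempty)
    (hP0 : ∀ s a s', 0 ≤ P s a s')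
    (hP1 : ∀ s, ∀ a ∈ avail s, (∑ s' : S, P s a s') = 1)
    (habs : ∀ s : S, (s ∈ B ∨ xstar P avail B s = 0) → Absorbing P avail s)
    (hs0B : s0 ∉ B) (hs0r : xstar P avail B s0 ≠ 0)
    (π : ℕ → S → A → ℝ) (hπ : IsPolicy avail π) (hstat : IsStationaryPolicy π)
    (hopt : reachProb P avail B s0 π = xstar P avail B s0) :
    (⨆ t : ℕ, ∑ s ∈ B ∪ Finset.univ.filter (fun s => xstar P avail B s = 0),
      ∑ a ∈ avail s, ENNReal.ofReal (occ P avail s0 π t s a)) = 1 :=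
  stationary_optimal_policy_reaches_absorbing_set_general P avail s0 B havail hP0 hP1 habs π hπ
    hstat hopt

end
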